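/- arXiv:1710.04855 — 5 statements merged into one kernel-verified Lean document; each statement's English description precedes it below -/
import Mathlib

section
/- Suppose λ ∈ ℂ, α < 0, μ > −3α, and u : [0,1] → ℂ is a nontrivial H² solution of λu − μu'' = 0 on (0,1) with u(1) = 0 and μu'(0) − αu(0) = 0. Then Re λ ≤ −(μ + 3α) < 0. -/
/-!
Multiplying the equation by `conj u` and integrating by parts gives the energy identity
`Re λ · ‖u‖² = -α |u 0|² - μ ‖u'‖²`. Since `u 1 = 0`, Cauchy–Schwarz applied to
`u y = -∫_y^1 u'` gives `|u y|² ≤ ‖u'‖²` for every `y ∈ [0, 1]`; this bounds the boundary term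
and, integrated, yields the Poincaré inequality `‖u‖² ≤ ‖u'‖²`. As `-α > 0` and `μ + α > 0`,
`Re λ · ‖u‖² ≤ -(μ + α) ‖u'‖² ≤ -(μ + α) ‖u‖²`, which is even stronger than the claim.
-/

open MeasureTheory Set ComplexConjugate

theorem sq_intervalIntegral_le {f : ℝ → ℝ} {a b : ℝ} (hab : a ≤ b)
    (hf : ContinuousOn f (Icc a b)) :
    (∫ x in a..b, f x) ^ 2 ≤ (b - a) * ∫ x in a..b, f x ^ 2 := by
  have hfi : IntervalIntegrable f volume a b := hf.intervalIntegrable_of_Icc hab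
  have hf2i : IntervalIntegrable (fun x => f x ^ 2) volume a b :=
    (hf.pow 2).intervalIntegrable_of_Icc hab
  -- `∫ (f - c)²` is a nonnegative quadratic in `c`, so its discriminant is nonpositive.
  have hquad : ∀ c : ℝ, 0 ≤ (b - a) * (c * c) + (-2 * ∫ x in a..b, f x) * c
      + ∫ x in a..b, f x ^ 2 := fun c => by
    have hsq : 0 ≤ ∫ x in a..b, (f x - c) ^ 2 :=
      intervalIntegral.integral_nonneg hab fun x _ => sq_nonneg _
    have hexpand : (fun x => (f x - c) ^ 2) = fun x => f x ^ 2 - 2 * c * f x + c ^ 2 := by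
      ext x; ring
    rw [hexpand,
      intervalIntegral.integral_add (hf2i.sub (hfi.const_mul _)) intervalIntegrable_const,
      intervalIntegral.integral_sub hf2i (hfi.const_mul _), intervalIntegral.integral_const_mul,
      intervalIntegral.integral_const, smul_eq_mul] at hsq
    linear_combination hsq
  have hdiscrim := discrim_le_zero hquad
  rw [discrim] at hdiscrim
  linarith

section Poincare

variable {E : Type*} [NormedAddCommGroup E] [NormedSpace ℝ E] [CompleteSpace E]
  {u u' : ℝ → E} {a b : ℝ}

theorem norm_sq_le_of_eq_zero_right (hu : ∀ t ∈ Icc a b, HasDerivAt u (u' t) t)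
    (hu' : ContinuousOn u' (Icc a b)) (hb : u b = 0) {y : ℝ} (hy : y ∈ Icc a b) :
    ‖u y‖ ^ 2 ≤ (b - a) * ∫ t in a..b, ‖u' t‖ ^ 2 := by
  obtain ⟨hay, hyb⟩ := hy
  have hsub : Icc y b ⊆ Icc a b := Icc_subset_Icc_left hay
  have hftc : ∫ t in y..b, u' t = u b - u y :=
    intervalIntegral.integral_eq_sub_of_hasDerivAt
      (fun t ht => hu t (hsub (by rwa [uIcc_of_le hyb] at ht)))
      ((hu'.mono hsub).intervalIntegrable_of_Icc hyb)
  have hnorm_sq : ContinuousOn (fun t => ‖u' t‖ ^ 2) (Icc a b) := hu'.norm.pow 2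
  calc ‖u y‖ ^ 2 = ‖∫ t in y..b, u' t‖ ^ 2 := by rw [hftc, hb, zero_sub, norm_neg]
    _ ≤ (∫ t in y..b, ‖u' t‖) ^ 2 := by
      gcongr; exact intervalIntegral.norm_integral_le_integral_norm hyb
    _ ≤ (b - y) * ∫ t in y..b, ‖u' t‖ ^ 2 := sq_intervalIntegral_le hyb (hu'.norm.mono hsub)
    _ ≤ (b - a) * ∫ t in a..b, ‖u' t‖ ^ 2 := by
      gcongr
      · exact intervalIntegral.integral_nonneg hyb fun t _ => sq_nonneg _
      · linarith
      · exact intervalIntegral.integral_mono_interval hay hyb le_rfl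
          (Filter.Eventually.of_forall fun t => sq_nonneg _)
          (hnorm_sq.intervalIntegrable_of_Icc (hay.trans hyb))

theorem integral_norm_sq_le_of_eq_zero_right (hab : a ≤ b)
    (hu : ∀ t ∈ Icc a b, HasDerivAt u (u' t) t) (hu' : ContinuousOn u' (Icc a b))
    (hb : u b = 0) :
    ∫ t in a..b, ‖u t‖ ^ 2 ≤ (b - a) ^ 2 * ∫ t in a..b, ‖u' t‖ ^ 2 := by
  have hcont : ContinuousOn u (Icc a b) := fun t ht => (hu t ht).continuousAt.continuousWithinAt
  calc ∫ t in a..b, ‖u t‖ ^ 2 ≤ ∫ _ in a..b, (b - a) * ∫ t in a..b, ‖u' t‖ ^ 2 :=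
        intervalIntegral.integral_mono_on hab ((hcont.norm.pow 2).intervalIntegrable_of_Icc hab)
          intervalIntegrable_const fun y hy => norm_sq_le_of_eq_zero_right hu hu' hb hy
    _ = (b - a) ^ 2 * ∫ t in a..b, ‖u' t‖ ^ 2 := by
      rw [intervalIntegral.integral_const, smul_eq_mul]; ring

end Poincare

theorem intervalIntegral_mul_conj (f : ℝ → ℂ) (a b : ℝ) :
    ∫ t in a..b, f t * conj (f t) = ((∫ t in a..b, ‖f t‖ ^ 2 : ℝ) : ℂ) := by
  simp_rw [Complex.mul_conj']
  exact_mod_cast intervalIntegral.integral_ofReal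

theorem integral_deriv_mul_conj_eq {u u' u'' : ℝ → ℂ} {a b : ℝ}
    (hu : ∀ t ∈ uIcc a b, HasDerivAt u (u' t) t) (hu' : ∀ t ∈ uIcc a b, HasDerivAt u' (u'' t) t)
    (hu'i : IntervalIntegrable u' volume a b) (hu''i : IntervalIntegrable u'' volume a b) :
    ∫ t in a..b, u'' t * conj (u t) =
      u' b * conj (u b) - u' a * conj (u a) - ((∫ t in a..b, ‖u' t‖ ^ 2 : ℝ) : ℂ) := by
  have hconj_i : IntervalIntegrable (fun t => conj (u' t)) volume a b :=
    ⟨Complex.conjCLE.toContinuousLinearMap.integrable_comp hu'i.1,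
      Complex.conjCLE.toContinuousLinearMap.integrable_comp hu'i.2⟩
  have hparts := intervalIntegral.integral_mul_deriv_eq_deriv_mul
    (fun t ht => (hu t ht).star) hu' hconj_i hu''i
  simp only [Complex.star_def] at hparts
  simp_rw [mul_comm (u'' _), hparts, mul_comm (conj (u' _)), intervalIntegral_mul_conj]
  ring

theorem re_mul_integral_norm_sq_eq_of_robin {lam : ℂ} {μ α : ℝ} {u u' u'' : ℝ → ℂ} {a b : ℝ}
    (hu : ∀ t ∈ uIcc a b, HasDerivAt u (u' t) t) (hu' : ∀ t ∈ uIcc a b, HasDerivAt u' (u'' t) t)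
    (hu'i : IntervalIntegrable u' volume a b) (hu''i : IntervalIntegrable u'' volume a b)
    (hode : ∀ t ∈ uIcc a b, lam * u t = μ * u'' t)
    (hb : u b = 0) (ha : (μ : ℂ) * u' a - α * u a = 0) :
    lam.re * ∫ t in a..b, ‖u t‖ ^ 2 = -(α * ‖u a‖ ^ 2) - μ * ∫ t in a..b, ‖u' t‖ ^ 2 := by
  suffices h : lam * ((∫ t in a..b, ‖u t‖ ^ 2 : ℝ) : ℂ) =
      ((-(α * ‖u a‖ ^ 2) - μ * ∫ t in a..b, ‖u' t‖ ^ 2 : ℝ) : ℂ) by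
    simpa only [Complex.re_mul_ofReal, Complex.ofReal_re] using congrArg Complex.re h
  calc lam * ((∫ t in a..b, ‖u t‖ ^ 2 : ℝ) : ℂ) = ∫ t in a..b, lam * u t * conj (u t) := by
        simp_rw [mul_assoc, intervalIntegral.integral_const_mul, intervalIntegral_mul_conj]
    _ = ∫ t in a..b, μ * (u'' t * conj (u t)) :=
        intervalIntegral.integral_congr fun t ht => by simp only [hode t ht, mul_assoc]
    _ = _ := by
        rw [intervalIntegral.integral_const_mul, integral_deriv_mul_conj_eq hu hu' hu'i hu''i, hb,
          map_zero, mul_zero, zero_sub]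
        push_cast
        linear_combination (-conj (u a)) * ha - α * Complex.mul_conj' (u a)

/-- Absorptive case `α < 0`, `μ > −3α`: any eigenvalue of the zero-mode problem
satisfies `Re λ ≤ −(μ + 3α) < 0`. -/
theorem stmt_6 (lam : ℂ) (μ α : ℝ) (hα : α < 0) (hμ : -3 * α < μ)
    (u : ℝ → ℂ) (hu : ContDiff ℝ 2 u)
    (hnt : ∃ y ∈ Set.Icc (0:ℝ) 1, u y ≠ 0)
    (heq : ∀ y ∈ Set.Ioo (0:ℝ) 1, lam * u y - (μ : ℂ) * deriv (deriv u) y = 0)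
    (hbc1 : u 1 = 0)
    (hbc0 : (μ : ℂ) * deriv u 0 - (α : ℂ) * u 0 = 0) :
    lam.re ≤ -(μ + 3 * α) ∧ -(μ + 3 * α) < 0 := by
  have hu1 : ContDiff ℝ 1 (deriv u) := hu.iterate_deriv' 1 1
  have hu2 : Continuous (deriv (deriv u)) := (hu.iterate_deriv' 0 2).continuous
  have hderiv : ∀ t, HasDerivAt u (deriv u t) t :=
    fun t => (hu.differentiable two_ne_zero t).hasDerivAt
  have hderiv' : ∀ t, HasDerivAt (deriv u) (deriv (deriv u) t) t :=
    fun t => (hu1.differentiable one_ne_zero t).hasDerivAt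
  have hode : ∀ t ∈ uIcc (0:ℝ) 1, lam * u t = μ * deriv (deriv u) t := by
    rw [uIcc_of_le zero_le_one, ← closure_Ioo zero_ne_one]
    exact EqOn.closure (fun t ht => sub_eq_zero.mp (heq t ht))
      (continuous_const.mul hu.continuous) (continuous_const.mul hu2)
  set A := ∫ t in (0:ℝ)..1, ‖u t‖ ^ 2
  set B := ∫ t in (0:ℝ)..1, ‖deriv u t‖ ^ 2
  have hA : 0 < A := by
    obtain ⟨y, hy, hy0⟩ := hnt
    exact intervalIntegral.integral_pos zero_lt_one (hu.continuous.norm.pow 2).continuousOn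
      (fun t _ => sq_nonneg _) ⟨y, hy, by positivity⟩
  have hpoincare : A ≤ B := by
    simpa using integral_norm_sq_le_of_eq_zero_right zero_le_one (fun t _ => hderiv t)
      hu1.continuous.continuousOn hbc1
  have htrace : ‖u 0‖ ^ 2 ≤ B := by
    simpa using norm_sq_le_of_eq_zero_right (fun t _ => hderiv t)
      hu1.continuous.continuousOn hbc1 (left_mem_Icc.mpr zero_le_one)
  have henergy : lam.re * A = -(α * ‖u 0‖ ^ 2) - μ * B :=
    re_mul_integral_norm_sq_eq_of_robin (fun t _ => hderiv t) (fun t _ => hderiv' t)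
      (hu1.continuous.intervalIntegrable _ _) (hu2.intervalIntegrable _ _) hode hbc1 hbc0
  refine ⟨le_of_mul_le_mul_right ?_ hA, by linarith⟩
  calc lam.re * A = -(α * ‖u 0‖ ^ 2) - μ * B := henergy
    _ ≤ -(μ + α) * B := by nlinarith
    _ ≤ -(μ + α) * A := by nlinarith
    _ ≤ -(μ + 3 * α) * A := by nlinarith
end

section
/- Suppose λ ∈ ℂ, μ > 0, α₀, α₁ ∈ ℝ, and u : [0,1] → ℂ is a nontrivial H² solution of λu − μu'' = 0 on (0,1) with Navier boundary conditions μu'(1) + α₁u(1) = 0 and μu'(0) − α₀u(0) = 0, and additionally ∫₀¹ u(y) dy = 0. Let M = max(|α₀|,|α₁|) and C_P the optimal mean-zero Poincaré constant on (0,1). If μ > (1+C_P)M − C_P(α₀+α₁), then Re λ ≤ ((1/C_P + 1)M − (α₀+α₁) − μ/C_P) < 0. -/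
/-!
Testing the equation against `ū` and integrating by parts gives the energy identity
`Re λ ‖u‖² = -α₀|u(0)|² - α₁|u(1)|² - μ‖u'‖²`. Integrating `(|u|²)'` against the weight
`α₀(x - 1) + α₁x`, whose slope is `α₀ + α₁` and whose size is at most `M`, bounds the boundary
terms: `α₀|u(0)|² + α₁|u(1)|² ≥ (α₀ + α₁)‖u‖² - M(2‖u‖² + ‖u'‖²/2)`. Since `u` has mean zero,
`u(y) = ∫₀^y s u' - ∫_y^1 (1 - s) u'`, and Cauchy–Schwarz gives the Poincaré inequality
`‖u‖² ≤ ‖u'‖²/6`. The hypothesis on `μ` forces `μ ≥ M/2`, and then these combine to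
`Re λ ≤ 5M - (α₀ + α₁) - 6μ`, which lies below `(π + 1)M - (α₀ + α₁) - πμ`; the constant
`1/6 < 1/π` is all the argument needs.
-/

open MeasureTheory Set

theorem sq_integral_mul_le {α : Type*} [MeasurableSpace α] {μ : Measure α} {f g : α → ℝ}
    (hf : Integrable (fun x => f x ^ 2) μ) (hg : Integrable (fun x => g x ^ 2) μ)
    (hfg : Integrable (fun x => f x * g x) μ) :
    (∫ x, f x * g x ∂μ) ^ 2 ≤ (∫ x, f x ^ 2 ∂μ) * ∫ x, g x ^ 2 ∂μ := by
  have hquad : ∀ t : ℝ, 0 ≤ (∫ x, f x ^ 2 ∂μ) * (t * t) + 2 * (∫ x, f x * g x ∂μ) * t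
      + ∫ x, g x ^ 2 ∂μ := by
    intro t
    have hexp : ∀ x, (t * f x + g x) ^ 2 = t * t * f x ^ 2 + 2 * t * (f x * g x) + g x ^ 2 :=
      fun x => by ring
    have h : 0 ≤ ∫ x, (t * f x + g x) ^ 2 ∂μ := integral_nonneg fun x => sq_nonneg _
    simp only [hexp] at h
    rw [integral_add (f := fun x => t * t * f x ^ 2 + 2 * t * (f x * g x))
      ((hf.const_mul _).add (hfg.const_mul _)) hg,
      integral_add (hf.const_mul _) (hfg.const_mul _), integral_const_mul,
      integral_const_mul] at h
    linarith
  have := discrim_le_zero hquad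
  rw [discrim] at this
  linarith

theorem sq_intervalIntegral_mul_le {f g : ℝ → ℝ} {a b : ℝ} (hab : a ≤ b) (hf : Continuous f)
    (hg : Continuous g) :
    (∫ x in a..b, f x * g x) ^ 2 ≤ (∫ x in a..b, f x ^ 2) * ∫ x in a..b, g x ^ 2 := by
  simp only [intervalIntegral.integral_of_le hab]
  exact sq_integral_mul_le (hf.pow 2).integrableOn_Ioc (hg.pow 2).integrableOn_Ioc
    (hf.mul hg).integrableOn_Ioc

theorem add_sq_le_add_mul_add {x y a b p q : ℝ} (hx : 0 ≤ x) (hy : 0 ≤ y) (ha : 0 ≤ a)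
    (hb : 0 ≤ b) (hp : 0 ≤ p) (hq : 0 ≤ q) (hxa : x ^ 2 ≤ a * p) (hyb : y ^ 2 ≤ b * q) :
    (x + y) ^ 2 ≤ (a + b) * (p + q) := by
  have hsq : (x * y) ^ 2 ≤ ((a * q + b * p) / 2) ^ 2 := by
    nlinarith [mul_le_mul hxa hyb (sq_nonneg y) (mul_nonneg ha hp), sq_nonneg (a * q - b * p)]
  have hxy : x * y ≤ (a * q + b * p) / 2 :=
    (pow_le_pow_iff_left₀ (mul_nonneg hx hy) (by positivity) two_ne_zero).mp hsq
  nlinarith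

section Poincare

variable {E : Type*} [NormedAddCommGroup E] [NormedSpace ℝ E] [CompleteSpace E]

theorem eq_integral_smul_deriv_sub_integral_smul_deriv {u : ℝ → E} (hu : ContDiff ℝ 1 u)
    (hmean : ∫ s in (0:ℝ)..1, u s = 0) (y : ℝ) :
    u y = (∫ s in (0:ℝ)..y, s • deriv u s) - ∫ s in y..1, (1 - s) • deriv u s := by
  have hd : ∀ x, HasDerivAt u (deriv u x) x :=
    fun x => (hu.differentiable one_ne_zero x).hasDerivAt
  have hu' : Continuous (deriv u) := hu.continuous_deriv le_rfl
  have hleft := intervalIntegral.integral_smul_deriv_eq_deriv_smul (a := 0) (b := y)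
    (u' := fun _ => (1:ℝ)) (fun x _ => hasDerivAt_id x) (fun x _ => hd x)
    intervalIntegrable_const (hu'.intervalIntegrable _ _)
  have hright := intervalIntegral.integral_smul_deriv_eq_deriv_smul (a := y) (b := 1)
    (u' := fun _ => (-1:ℝ)) (fun x _ => (hasDerivAt_id x).const_sub 1) (fun x _ => hd x)
    intervalIntegrable_const (hu'.intervalIntegrable _ _)
  have hsplit := intervalIntegral.integral_add_adjacent_intervals
    (hu.continuous.intervalIntegrable (μ := volume) 0 y) (hu.continuous.intervalIntegrable y 1)
  simp only [id, one_smul, zero_smul, neg_one_smul, intervalIntegral.integral_neg, sub_self,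
    sub_zero, zero_sub] at hleft hright
  rw [hmean] at hsplit
  linear_combination (norm := module) -hleft + hright + hsplit

theorem norm_sq_le_of_integral_eq_zero {u : ℝ → E} (hu : ContDiff ℝ 1 u)
    (hmean : ∫ s in (0:ℝ)..1, u s = 0) {y : ℝ} (hy : y ∈ Icc (0:ℝ) 1) :
    ‖u y‖ ^ 2 ≤ (y ^ 3 / 3 + (1 - y) ^ 3 / 3) * ∫ s in (0:ℝ)..1, ‖deriv u s‖ ^ 2 := by
  have hg : Continuous fun s => ‖deriv u s‖ := (hu.continuous_deriv le_rfl).norm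
  have hg2 : Continuous fun s => ‖deriv u s‖ ^ 2 := hg.pow 2
  have hleft : ‖∫ s in (0:ℝ)..y, s • deriv u s‖ ≤ ∫ s in (0:ℝ)..y, s * ‖deriv u s‖ :=
    intervalIntegral.norm_integral_le_of_norm_le hy.1
      (ae_of_all _ fun s hs => by rw [norm_smul, Real.norm_of_nonneg hs.1.le])
      ((continuous_id.mul hg).intervalIntegrable _ _)
  have hright : ‖∫ s in y..1, (1 - s) • deriv u s‖ ≤ ∫ s in y..1, (1 - s) * ‖deriv u s‖ :=
    intervalIntegral.norm_integral_le_of_norm_le hy.2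
      (ae_of_all _ fun s hs => by rw [norm_smul, Real.norm_of_nonneg (sub_nonneg.2 hs.2)])
      (((continuous_const.sub continuous_id).mul hg).intervalIntegrable _ _)
  have hnorm :
      ‖u y‖ ≤ (∫ s in (0:ℝ)..y, s * ‖deriv u s‖) + ∫ s in y..1, (1 - s) * ‖deriv u s‖ := by
    rw [eq_integral_smul_deriv_sub_integral_smul_deriv hu hmean y]
    exact (norm_sub_le _ _).trans (add_le_add hleft hright)
  have hCSleft := sq_intervalIntegral_mul_le (f := fun s => s) hy.1 continuous_id hg
  have hCSright := sq_intervalIntegral_mul_le (f := fun s => 1 - s) hy.2 (by fun_prop) hg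
  rw [integral_pow] at hCSleft
  rw [intervalIntegral.integral_comp_sub_left (fun x => x ^ 2), integral_pow] at hCSright
  norm_num at hCSleft hCSright
  rw [← intervalIntegral.integral_add_adjacent_intervals
    (hg2.intervalIntegrable (μ := volume) 0 y) (hg2.intervalIntegrable y 1)]
  refine (pow_le_pow_left₀ (norm_nonneg _) hnorm 2).trans
    (add_sq_le_add_mul_add ?_ ?_ (by have := hy.1; positivity) ?_ ?_ ?_ hCSleft hCSright)
  · exact intervalIntegral.integral_nonneg hy.1 fun s hs => mul_nonneg hs.1 (norm_nonneg _)
  · exact intervalIntegral.integral_nonneg hy.2 fun s hs =>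
      mul_nonneg (sub_nonneg.2 hs.2) (norm_nonneg _)
  · have := sub_nonneg.2 hy.2; positivity
  · exact intervalIntegral.integral_nonneg hy.1 fun s _ => sq_nonneg _
  · exact intervalIntegral.integral_nonneg hy.2 fun s _ => sq_nonneg _

theorem integral_norm_sq_le_of_integral_eq_zero {u : ℝ → E} (hu : ContDiff ℝ 1 u)
    (hmean : ∫ s in (0:ℝ)..1, u s = 0) :
    ∫ y in (0:ℝ)..1, ‖u y‖ ^ 2 ≤ (1 / 6) * ∫ y in (0:ℝ)..1, ‖deriv u y‖ ^ 2 := by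
  have hweight : ∫ y in (0:ℝ)..1, (y ^ 3 / 3 + (1 - y) ^ 3 / 3) = 1 / 6 := by
    rw [intervalIntegral.integral_add (Continuous.intervalIntegrable (by fun_prop) _ _)
      (Continuous.intervalIntegrable (by fun_prop) _ _), intervalIntegral.integral_div,
      intervalIntegral.integral_div, intervalIntegral.integral_comp_sub_left (fun x => x ^ 3)]
    norm_num
  have hmono := intervalIntegral.integral_mono_on (μ := volume) zero_le_one
    ((hu.continuous.norm.pow 2).intervalIntegrable _ _)
    (Continuous.intervalIntegrable (by fun_prop) _ _)
    (fun y hy => norm_sq_le_of_integral_eq_zero hu hmean hy)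
  rwa [intervalIntegral.integral_mul_const, hweight] at hmono

end Poincare

theorem le_mul_add_mul_of_hasDerivAt {f f' : ℝ → ℝ}
    (hf : ∀ x ∈ Icc (0:ℝ) 1, HasDerivAt f (f' x) x) (hf' : IntervalIntegrable f' volume 0 1)
    (a b : ℝ) :
    (a + b) * (∫ x in (0:ℝ)..1, f x) - max |a| |b| * ∫ x in (0:ℝ)..1, |f' x| ≤
      a * f 0 + b * f 1 := by
  have hparts : ∫ x in (0:ℝ)..1, (a * (x - 1) + b * x) * f' x =
      b * f 1 + a * f 0 - (a + b) * ∫ x in (0:ℝ)..1, f x := by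
    have := intervalIntegral.integral_mul_deriv_eq_deriv_mul
      (u := fun x => a * (x - 1) + b * x) (u' := fun _ => a + b)
      (fun x _ => by
        simpa using (((hasDerivAt_id' x).sub_const 1).const_mul a).fun_add
          ((hasDerivAt_id' x).const_mul b))
      (fun x hx => hf x (by rwa [uIcc_of_le zero_le_one] at hx)) intervalIntegrable_const hf'
    rw [intervalIntegral.integral_const_mul] at this
    norm_num at this
    exact this
  have hweight : |∫ x in (0:ℝ)..1, (a * (x - 1) + b * x) * f' x| ≤
      max |a| |b| * ∫ x in (0:ℝ)..1, |f' x| := by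
    rw [← Real.norm_eq_abs, ← intervalIntegral.integral_const_mul]
    refine intervalIntegral.norm_integral_le_of_norm_le zero_le_one
      (ae_of_all _ fun x hx => ?_) (hf'.abs.const_mul _)
    rw [norm_mul, Real.norm_eq_abs, Real.norm_eq_abs]
    refine mul_le_mul_of_nonneg_right ?_ (abs_nonneg _)
    calc |a * (x - 1) + b * x| ≤ |a| * (1 - x) + |b| * x := by
          rw [show a * (x - 1) = -a * (1 - x) by ring]
          refine (abs_add_le _ _).trans_eq ?_
          rw [abs_mul, abs_mul, abs_neg, abs_of_nonneg (sub_nonneg.2 hx.2), abs_of_pos hx.1]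
      _ ≤ max |a| |b| * (1 - x) + max |a| |b| * x := by
          gcongr
          · linarith [hx.2]
          · exact le_max_left _ _
          · linarith [hx.1]
          · exact le_max_right _ _
      _ = max |a| |b| := by ring
  rw [hparts] at hweight
  linarith [neg_le_of_abs_le hweight]

section InnerProduct

variable {F : Type*} [NormedAddCommGroup F] [InnerProductSpace ℝ F]

theorem integral_abs_inner_deriv_le {u : ℝ → F} (hu : ContDiff ℝ 1 u) :
    ∫ x in (0:ℝ)..1, |2 * inner ℝ (u x) (deriv u x)| ≤
      2 * (∫ x in (0:ℝ)..1, ‖u x‖ ^ 2) + (∫ x in (0:ℝ)..1, ‖deriv u x‖ ^ 2) / 2 := by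
  have hu' : Continuous (deriv u) := hu.continuous_deriv le_rfl
  have hpointwise : ∀ x,
      |2 * inner ℝ (u x) (deriv u x)| ≤ 2 * ‖u x‖ ^ 2 + ‖deriv u x‖ ^ 2 / 2 := by
    intro x
    rw [abs_mul, abs_two]
    nlinarith [abs_real_inner_le_norm (u x) (deriv u x), sq_nonneg (2 * ‖u x‖ - ‖deriv u x‖)]
  have hmono := intervalIntegral.integral_mono_on (μ := volume) zero_le_one
    (Continuous.intervalIntegrable (by fun_prop) _ _)
    (Continuous.intervalIntegrable (by fun_prop) _ _) (fun x _ => hpointwise x)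
  rwa [intervalIntegral.integral_add (Continuous.intervalIntegrable (by fun_prop) _ _)
    (Continuous.intervalIntegrable (by fun_prop) _ _), intervalIntegral.integral_const_mul,
    intervalIntegral.integral_div] at hmono

theorem le_mul_norm_sq_add_mul_norm_sq {u : ℝ → F} (hu : ContDiff ℝ 1 u) (a b : ℝ) :
    (a + b) * (∫ x in (0:ℝ)..1, ‖u x‖ ^ 2) - max |a| |b| *
        (2 * (∫ x in (0:ℝ)..1, ‖u x‖ ^ 2) + (∫ x in (0:ℝ)..1, ‖deriv u x‖ ^ 2) / 2) ≤
      a * ‖u 0‖ ^ 2 + b * ‖u 1‖ ^ 2 := by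
  have hd : ∀ x, HasDerivAt (fun x => ‖u x‖ ^ 2) (2 * inner ℝ (u x) (deriv u x)) x :=
    fun x => (hu.differentiable one_ne_zero x).hasDerivAt.norm_sq
  have hd' : Continuous fun x => 2 * inner ℝ (u x) (deriv u x) := by
    have := hu.continuous_deriv le_rfl
    fun_prop
  have hmax : 0 ≤ max |a| |b| := le_max_of_le_left (abs_nonneg a)
  linarith [le_mul_add_mul_of_hasDerivAt (fun x _ => hd x) (hd'.intervalIntegrable 0 1) a b,
    mul_le_mul_of_nonneg_left (integral_abs_inner_deriv_le hu) hmax]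

end InnerProduct

theorem intervalIntegral_pos_of_continuous_of_ne_zero {f : ℝ → ℝ} {a b x : ℝ} (hab : a < b)
    (hf : Continuous f) (hf0 : ∀ t, 0 ≤ f t) (hx : x ∈ Icc a b) (hfx : f x ≠ 0) :
    0 < ∫ t in a..b, f t := by
  obtain ⟨z, hzf, hz⟩ : (Function.support f ∩ Ioo a b).Nonempty := by
    rw [← closure_Ioo hab.ne] at hx
    exact mem_closure_iff.mp hx _ hf.isOpen_support hfx
  rw [intervalIntegral.integral_pos_iff_support_of_nonneg_ae (ae_of_all _ hf0)
    (hf.intervalIntegrable a b)]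
  exact ⟨hab, (hf.isOpen_support.inter isOpen_Ioo).measure_pos volume ⟨z, hzf, hz⟩ |>.trans_le
    (measure_mono (inter_subset_inter_right _ Ioo_subset_Ioc_self))⟩

theorem re_mul_integral_norm_sq_eq {lam : ℂ} {μ α₀ α₁ : ℝ} {u : ℝ → ℂ} (hu : ContDiff ℝ 2 u)
    (heq : ∀ y ∈ Ioo (0:ℝ) 1, lam * u y - (μ : ℂ) * deriv (deriv u) y = 0)
    (hbc1 : (μ : ℂ) * deriv u 1 + (α₁ : ℂ) * u 1 = 0)
    (hbc0 : (μ : ℂ) * deriv u 0 - (α₀ : ℂ) * u 0 = 0) :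
    lam.re * ∫ y in (0:ℝ)..1, ‖u y‖ ^ 2 =
      -α₀ * ‖u 0‖ ^ 2 - α₁ * ‖u 1‖ ^ 2 - μ * ∫ y in (0:ℝ)..1, ‖deriv u y‖ ^ 2 := by
  obtain ⟨hu1, -, hu'⟩ := contDiff_succ_iff_deriv.mp (show ContDiff ℝ (1 + 1) u from hu)
  have hu'' : Continuous (deriv (deriv u)) := hu'.continuous_deriv le_rfl
  have heqIcc : EqOn (fun y => lam * u y - (μ : ℂ) * deriv (deriv u) y) 0 (Icc 0 1) := by
    rw [← closure_Ioo zero_ne_one]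
    exact EqOn.closure heq (by fun_prop) continuous_const
  have hparts := intervalIntegral.integral_mul_deriv_eq_deriv_mul (a := 0) (b := 1)
    (u := fun y => starRingEnd ℂ (u y)) (u' := fun y => starRingEnd ℂ (deriv u y))
    (fun x _ => (hu1 x).hasDerivAt.star) (fun x _ => (hu'.differentiable one_ne_zero x).hasDerivAt)
    (Continuous.intervalIntegrable (by fun_prop) _ _) (hu''.intervalIntegrable _ _)
  have hlam : (μ : ℂ) * ∫ y in (0:ℝ)..1, starRingEnd ℂ (u y) * deriv (deriv u) y =
      lam * ∫ y in (0:ℝ)..1, starRingEnd ℂ (u y) * u y := by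
    rw [← intervalIntegral.integral_const_mul, ← intervalIntegral.integral_const_mul]
    refine intervalIntegral.integral_congr fun y hy => ?_
    rw [uIcc_of_le zero_le_one] at hy
    have h : lam * u y - (μ : ℂ) * deriv (deriv u) y = 0 := heqIcc hy
    linear_combination -(starRingEnd ℂ (u y)) * h
  have hnormsq : ∀ v : ℝ → ℂ, ∫ y in (0:ℝ)..1, starRingEnd ℂ (v y) * v y =
      ((∫ y in (0:ℝ)..1, ‖v y‖ ^ 2 : ℝ) : ℂ) := fun v => by
    simp only [Complex.conj_mul', ← Complex.ofReal_pow, intervalIntegral.integral_ofReal]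
  have key : lam * ((∫ y in (0:ℝ)..1, ‖u y‖ ^ 2 : ℝ) : ℂ) =
      ((-α₀ * ‖u 0‖ ^ 2 - α₁ * ‖u 1‖ ^ 2 - μ * ∫ y in (0:ℝ)..1, ‖deriv u y‖ ^ 2 : ℝ) : ℂ) := by
    rw [← hnormsq, ← hlam, hparts, hnormsq]
    push_cast
    simp only [← Complex.conj_mul']
    linear_combination (starRingEnd ℂ (u 1)) * hbc1 - (starRingEnd ℂ (u 0)) * hbc0
  simpa [← Complex.ofReal_pow] using congrArg Complex.re key

theorem stmt_7_general (lam : ℂ) (μ α₀ α₁ : ℝ)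
    (u : ℝ → ℂ) (hu : ContDiff ℝ 2 u)
    (hnt : ∃ y ∈ Set.Icc (0:ℝ) 1, u y ≠ 0)
    (heq : ∀ y ∈ Set.Ioo (0:ℝ) 1, lam * u y - (μ : ℂ) * deriv (deriv u) y = 0)
    (hbc1 : (μ : ℂ) * deriv u 1 + (α₁ : ℂ) * u 1 = 0)
    (hbc0 : (μ : ℂ) * deriv u 0 - (α₀ : ℂ) * u 0 = 0)
    (hmean : ∫ y in (0:ℝ)..1, u y = 0)
    (M CP : ℝ) (hM : M = max |α₀| |α₁|) (hCP : CP = Real.pi⁻¹)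
    (hμbig : μ > (1 + CP) * M - CP * (α₀ + α₁)) :
    lam.re ≤ (1 / CP + 1) * M - (α₀ + α₁) - μ / CP ∧
      (1 / CP + 1) * M - (α₀ + α₁) - μ / CP < 0 := by
  obtain ⟨y₀, hy₀, hne⟩ := hnt
  have hX : 0 < ∫ y in (0:ℝ)..1, ‖u y‖ ^ 2 :=
    intervalIntegral_pos_of_continuous_of_ne_zero zero_lt_one (hu.continuous.norm.pow 2)
      (fun _ => sq_nonneg _) hy₀ (by simpa using hne)
  have henergy := re_mul_integral_norm_sq_eq hu heq hbc1 hbc0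
  have hboundary := le_mul_norm_sq_add_mul_norm_sq (hu.of_le one_le_two) α₀ α₁
  have hpoincare := integral_norm_sq_le_of_integral_eq_zero (hu.of_le one_le_two) hmean
  rw [← hM] at hboundary
  have hM0 : 0 ≤ M := hM ▸ le_max_of_le_left (abs_nonneg α₀)
  have hsum : α₀ + α₁ ≤ 2 * M := by
    have := le_abs_self α₀; have := le_abs_self α₁
    linarith [hM ▸ le_max_left |α₀| |α₁|, hM ▸ le_max_right |α₀| |α₁|]
  subst hCP
  have hπ := Real.pi_gt_three
  have hμπ : (Real.pi + 1) * M - (α₀ + α₁) < Real.pi * μ := by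
    have e : Real.pi * ((1 + Real.pi⁻¹) * M - Real.pi⁻¹ * (α₀ + α₁)) =
        (Real.pi + 1) * M - (α₀ + α₁) := by field_simp
    linarith [mul_lt_mul_of_pos_left hμbig Real.pi_pos]
  have hμM : M / 2 ≤ μ := by nlinarith
  have hre : lam.re ≤ 5 * M - (α₀ + α₁) - 6 * μ := by
    refine le_of_mul_le_mul_right ?_ hX
    nlinarith [mul_le_mul_of_nonneg_left hpoincare (sub_nonneg.2 hμM)]
  simp only [div_inv_eq_mul]
  constructor <;> nlinarith [Real.pi_le_four]

/-- Zero Fourier mode with Navier conditions on both boundaries and zero mean: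
with `M = max(|α₀|,|α₁|)` and `C_P = 1/π` the optimal mean-zero Poincaré constant,
if `μ > (1+C_P)M − C_P(α₀+α₁)` then `Re λ ≤ (1/C_P + 1)M − (α₀+α₁) − μ/C_P < 0`. -/
theorem stmt_7 (lam : ℂ) (μ α₀ α₁ : ℝ) (hμ : 0 < μ)
    (u : ℝ → ℂ) (hu : ContDiff ℝ 2 u)
    (hnt : ∃ y ∈ Set.Icc (0:ℝ) 1, u y ≠ 0)
    (heq : ∀ y ∈ Set.Ioo (0:ℝ) 1, lam * u y - (μ : ℂ) * deriv (deriv u) y = 0)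
    (hbc1 : (μ : ℂ) * deriv u 1 + (α₁ : ℂ) * u 1 = 0)
    (hbc0 : (μ : ℂ) * deriv u 0 - (α₀ : ℂ) * u 0 = 0)
    (hmean : ∫ y in (0:ℝ)..1, u y = 0)
    (M CP : ℝ) (hM : M = max |α₀| |α₁|) (hCP : CP = Real.pi⁻¹)
    (hμbig : μ > (1 + CP) * M - CP * (α₀ + α₁)) :
    lam.re ≤ (1 / CP + 1) * M - (α₀ + α₁) - μ / CP ∧
      (1 / CP + 1) * M - (α₀ + α₁) - μ / CP < 0 :=
  stmt_7_general lam μ α₀ α₁ u hu hnt heq hbc1 hbc0 hmean M CP hM hCP hμbig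
end

section
/- Let I₀, I₁, I₂ ≥ 0 with I₀, I₁ > 0, and suppose I₂² ≥ h·I₁², I₁² ≥ I₀², and I₂² ≥ h·I₀² for some h ∈ (0,1]. Then for any k > 0 and any δ ∈ (δ₀,1] (where 2δ₀³ = 1 − δ₀), (I₂² + 2k²I₁² + k⁴I₀²)/(I₀I₁) ≥ max( h + 2√2 k³(1−δ)^{1/2}, h + 2k²δ ). -/
/-- Key algebraic inequality (3.18) of the Orr–Sommerfeld analysis. -/
theorem stmt_11 (I₀ I₁ I₂ h : ℝ) (hI₀ : 0 < I₀) (hI₁ : 0 < I₁) (hI₂ : 0 ≤ I₂)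
    (hh : h ∈ Set.Ioc (0:ℝ) 1)
    (h21 : I₂ ^ 2 ≥ h * I₁ ^ 2) (h10 : I₁ ^ 2 ≥ I₀ ^ 2) (h20 : I₂ ^ 2 ≥ h * I₀ ^ 2)
    (δ₀ : ℝ) (hδ₀ : δ₀ ∈ Set.Ioo (0:ℝ) 1) (hroot : 2 * δ₀ ^ 3 = 1 - δ₀)
    (k : ℝ) (hk : 0 < k) (δ : ℝ) (hδ : δ ∈ Set.Ioc δ₀ 1) :
    (I₂ ^ 2 + 2 * k ^ 2 * I₁ ^ 2 + k ^ 4 * I₀ ^ 2) / (I₀ * I₁)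
      ≥ max (h + 2 * Real.sqrt 2 * k ^ 3 * Real.sqrt (1 - δ)) (h + 2 * k ^ 2 * δ) := by
  obtain ⟨hh0, hh1⟩ := hh
  obtain ⟨hδl, hδu⟩ := hδ
  have hδpos : 0 < δ := lt_trans hδ₀.1 hδl
  have hP : 0 < I₀ * I₁ := mul_pos hI₀ hI₁
  -- I₂² ≥ h I₀ I₁
  have key : h * (I₀ * I₁) ≤ I₂ ^ 2 := by
    nlinarith [sq_nonneg (I₀ - I₁)]
  have hs2 : Real.sqrt 2 ^ 2 = 2 := Real.sq_sqrt (by norm_num)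
  have hs2nn : 0 ≤ Real.sqrt 2 := Real.sqrt_nonneg 2
  have hsd : Real.sqrt (1 - δ) ≤ 1 := Real.sqrt_le_one.mpr (by linarith)
  have hsdnn : 0 ≤ Real.sqrt (1 - δ) := Real.sqrt_nonneg _
  rw [ge_iff_le, le_div_iff₀ hP, max_mul_of_nonneg _ _ hP.le]
  apply max_le
  · -- first branch
    have expand : (Real.sqrt 2 * k * I₁ - k ^ 2 * I₀) ^ 2
        = Real.sqrt 2 ^ 2 * k ^ 2 * I₁ ^ 2 - 2 * Real.sqrt 2 * k ^ 3 * (I₀ * I₁)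
          + k ^ 4 * I₀ ^ 2 := by ring
    rw [hs2] at expand
    have sq1 : 0 ≤ 2 * k ^ 2 * I₁ ^ 2 - 2 * Real.sqrt 2 * k ^ 3 * (I₀ * I₁)
        + k ^ 4 * I₀ ^ 2 := by rw [← expand]; positivity
    have c : (0:ℝ) ≤ 2 * Real.sqrt 2 * k ^ 3 * (I₀ * I₁) := by positivity
    have h1 := mul_le_mul_of_nonneg_left hsd c
    nlinarith
  · -- second branch
    have hII : I₀ * I₁ ≤ I₁ ^ 2 := by nlinarith
    have h2 := mul_le_mul_of_nonneg_right hδu hP.le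
    have c : (0:ℝ) ≤ 2 * k ^ 2 := by positivity
    have h3 := mul_le_mul_of_nonneg_left (h2.trans (by linarith : (1:ℝ) * (I₀ * I₁) ≤ I₁ ^ 2)) c
    nlinarith [sq_nonneg (k ^ 2 * I₀)]
end

section
/- Let μ > 0, α ∈ ℝ with μ > 2|α| − α, and let φ ∈ H²(0,1) (complex valued) satisfy φ'(1) = 0. Then ∫₀¹|φ''|² dy + (α/μ)|φ'(0)|² ≥ (1 − (2|α|−α)/μ)·∫₀¹|φ'|² dy. -/
open MeasureTheory Set intervalIntegral

/-!
Write `f = φ'`, so `f 1 = 0`. Integrating `(‖f‖²)' = 2⟪f, f'⟫` over `[0, 1]` gives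
`‖f 0‖² ≤ ∫ ‖f‖² + ∫ ‖f'‖²`, and `‖f x‖ ≤ ∫ ‖f'‖` with Cauchy–Schwarz gives the Poincaré bound
`∫ ‖f‖² ≤ ∫ ‖f'‖²`. The estimate is a nonnegative combination of these two inequalities,
the boundary inequality being needed only when `α < 0`.
-/

theorem sq_intervalIntegral_le_mul_integral_sq {g : ℝ → ℝ} {a b : ℝ} (hab : a ≤ b)
    (hg : IntervalIntegrable g volume a b)
    (hg2 : IntervalIntegrable (fun x => g x ^ 2) volume a b) :
    (∫ x in a..b, g x) ^ 2 ≤ (b - a) * ∫ x in a..b, g x ^ 2 := by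
  have hquad : ∀ c : ℝ, 0 ≤ (b - a) * (c * c) + (-2 * ∫ x in a..b, g x) * c
      + ∫ x in a..b, g x ^ 2 := by
    intro c
    have hexpand : (fun x => (g x - c) ^ 2) = fun x => g x ^ 2 - (2 * c * g x - c ^ 2) := by
      ext x; ring
    have hint := integral_nonneg (μ := volume) hab fun x _ => sq_nonneg (g x - c)
    rw [hexpand, integral_sub hg2 ((hg.const_mul _).sub intervalIntegrable_const),
      integral_sub (hg.const_mul _) intervalIntegrable_const, intervalIntegral.integral_const_mul,
      intervalIntegral.integral_const, smul_eq_mul] at hint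
    linarith
  have hdiscrim := discrim_le_zero hquad
  rw [discrim] at hdiscrim
  linarith

section Poincare

variable {E : Type*} [NormedAddCommGroup E] [NormedSpace ℝ E] [CompleteSpace E]
  {f : ℝ → E} {a b : ℝ}

theorem norm_sq_le_mul_integral_norm_deriv_sq_of_eq_zero_right (hf : ContDiff ℝ 1 f)
    (hfb : f b = 0) {x : ℝ} (hx : x ∈ Icc a b) :
    ‖f x‖ ^ 2 ≤ (b - a) * ∫ t in a..b, ‖deriv f t‖ ^ 2 := by
  have hf' : Continuous (deriv f) := hf.continuous_deriv le_rfl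
  have hftc : ∫ t in x..b, deriv f t = -f x := by
    rw [integral_deriv_eq_sub (fun t _ => (hf.differentiable one_ne_zero t))
      (hf'.intervalIntegrable x b), hfb, zero_sub]
  have hbound : ‖f x‖ ≤ ∫ t in a..b, ‖deriv f t‖ := calc
    ‖f x‖ = ‖∫ t in x..b, deriv f t‖ := by rw [hftc, norm_neg]
    _ ≤ ∫ t in x..b, ‖deriv f t‖ := norm_integral_le_integral_norm hx.2
    _ ≤ ∫ t in a..b, ‖deriv f t‖ :=
      integral_mono_interval hx.1 hx.2 le_rfl (Filter.Eventually.of_forall fun _ => norm_nonneg _)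
        (hf'.norm.intervalIntegrable a b)
  calc ‖f x‖ ^ 2 ≤ (∫ t in a..b, ‖deriv f t‖) ^ 2 := pow_le_pow_left₀ (norm_nonneg _) hbound 2
    _ ≤ (b - a) * ∫ t in a..b, ‖deriv f t‖ ^ 2 :=
      sq_intervalIntegral_le_mul_integral_sq (hx.1.trans hx.2) (hf'.norm.intervalIntegrable a b)
        ((hf'.norm.pow 2).intervalIntegrable a b)

theorem integral_norm_sq_le_of_eq_zero_right_s12 (hf : ContDiff ℝ 1 f) (hfb : f b = 0)
    (hab : a ≤ b) :
    ∫ t in a..b, ‖f t‖ ^ 2 ≤ (b - a) ^ 2 * ∫ t in a..b, ‖deriv f t‖ ^ 2 := by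
  calc ∫ t in a..b, ‖f t‖ ^ 2
      ≤ ∫ _ in a..b, (b - a) * ∫ t in a..b, ‖deriv f t‖ ^ 2 :=
        integral_mono_on hab ((hf.continuous.norm.pow 2).intervalIntegrable a b)
          intervalIntegrable_const
          fun x hx => norm_sq_le_mul_integral_norm_deriv_sq_of_eq_zero_right hf hfb hx
    _ = (b - a) ^ 2 * ∫ t in a..b, ‖deriv f t‖ ^ 2 := by
      rw [intervalIntegral.integral_const, smul_eq_mul]; ring

end Poincare

theorem norm_sq_le_integral_norm_sq_add_integral_norm_deriv_sq {E : Type*}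
    [NormedAddCommGroup E] [InnerProductSpace ℝ E] [CompleteSpace E] {f : ℝ → E} {a b : ℝ}
    (hf : ContDiff ℝ 1 f) (hfb : f b = 0) (hab : a ≤ b) :
    ‖f a‖ ^ 2 ≤ (∫ t in a..b, ‖f t‖ ^ 2) + ∫ t in a..b, ‖deriv f t‖ ^ 2 := by
  have hf' : Continuous (deriv f) := hf.continuous_deriv le_rfl
  have hinner : Continuous fun t => 2 * inner ℝ (f t) (deriv f t) :=
    continuous_const.mul (hf.continuous.inner hf')
  have hftc : ∫ t in a..b, 2 * inner ℝ (f t) (deriv f t) = -‖f a‖ ^ 2 := by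
    rw [integral_eq_sub_of_hasDerivAt (f := fun t => ‖f t‖ ^ 2)
      (fun t _ => ((hf.differentiable one_ne_zero t).hasDerivAt).norm_sq)
      (hinner.intervalIntegrable a b), hfb, norm_zero]
    ring
  -- `‖u + v‖² ≥ 0` is `-2⟪u, v⟫ ≤ ‖u‖² + ‖v‖²`
  have hpointwise : ∀ t ∈ Icc a b,
      -(2 * inner ℝ (f t) (deriv f t)) ≤ ‖f t‖ ^ 2 + ‖deriv f t‖ ^ 2 := fun t _ => by
    nlinarith [norm_add_sq_real (f t) (deriv f t), sq_nonneg ‖f t + deriv f t‖]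
  have hnorm_f := (hf.continuous.norm.pow 2).intervalIntegrable (μ := volume) a b
  have hnorm_f' := (hf'.norm.pow 2).intervalIntegrable (μ := volume) a b
  calc ‖f a‖ ^ 2 = ∫ t in a..b, -(2 * inner ℝ (f t) (deriv f t)) := by
        rw [intervalIntegral.integral_neg, hftc, neg_neg]
    _ ≤ ∫ t in a..b, (‖f t‖ ^ 2 + ‖deriv f t‖ ^ 2) :=
        integral_mono_on hab (hinner.intervalIntegrable a b).neg (hnorm_f.add hnorm_f') hpointwise
    _ = (∫ t in a..b, ‖f t‖ ^ 2) + ∫ t in a..b, ‖deriv f t‖ ^ 2 := integral_add hnorm_f hnorm_f'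

theorem weighted_energy_bound {μ α A B D : ℝ} (hμ : 0 < μ) (hμα : 2 * |α| - α < μ)
    (hB : 0 ≤ B) (hD : 0 ≤ D) (hBA : B ≤ A) (hDBA : D ≤ B + A) :
    (1 - (2 * |α| - α) / μ) * B ≤ A + α / μ * D := by
  suffices (μ - (2 * |α| - α)) * B ≤ μ * A + α * D by
    calc (1 - (2 * |α| - α) / μ) * B = (μ - (2 * |α| - α)) * B / μ := by field_simp
      _ ≤ (μ * A + α * D) / μ := by gcongr
      _ = A + α / μ * D := by field_simp
  rcases le_or_gt 0 α with hα | hα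
  · rw [abs_of_nonneg hα]
    nlinarith [mul_nonneg hα hD]
  · rw [abs_of_neg hα] at hμα ⊢
    nlinarith [mul_le_mul_of_nonpos_left hDBA hα.le]

/-- Estimate (3.15): weighted second-order energy bound, single Navier boundary. -/
theorem stmt_12 (μ α : ℝ) (hμ : 0 < μ) (hμα : μ > 2 * |α| - α)
    (φ : ℝ → ℂ) (hφ : ContDiff ℝ 2 φ) (hbc : deriv φ 1 = 0) :
    (∫ y in (0:ℝ)..1, ‖deriv (deriv φ) y‖ ^ 2) + (α / μ) * ‖deriv φ 0‖ ^ 2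
      ≥ (1 - (2 * |α| - α) / μ) * ∫ y in (0:ℝ)..1, ‖deriv φ y‖ ^ 2 := by
  have hφ' : ContDiff ℝ 1 (deriv φ) := hφ.deriv'
  have hpoincare := integral_norm_sq_le_of_eq_zero_right_s12 hφ' hbc zero_le_one
  rw [sub_zero, one_pow, one_mul] at hpoincare
  exact weighted_energy_bound hμ hμα
    (integral_nonneg (μ := volume) zero_le_one fun _ _ => sq_nonneg _) (sq_nonneg _) hpoincare
    (norm_sq_le_integral_norm_sq_add_integral_norm_deriv_sq hφ' hbc zero_le_one)
end

section
/- Let μ > 0 and α₀, α₁ ∈ ℝ with μ > 2max(|α₀|,|α₁|) − (α₀+α₁), and let φ ∈ H²(0,1) be complex valued with φ(0)=φ(1)=0. Then ∫₀¹|φ''|² dy + (α₀/μ)|φ'(0)|² + (α₁/μ)|φ'(1)|² ≥ (1 − (2max(|α₀|,|α₁|)−α₀−α₁)/μ)·∫₀¹|φ'|² dy. -/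
/-!
Put `ψ = φ'`. Since `φ(0) = φ(1) = 0`, `ψ` has mean zero on `[0,1]`, so writing
`ψ(y) = ∫₀¹ (ψ(y) - ψ(x)) dx` gives `‖ψ(y)‖ ≤ ∫₀¹ ‖ψ'‖` and, by Cauchy–Schwarz, the Poincaré
inequality `∫₀¹ ‖ψ‖² ≤ ∫₀¹ ‖ψ'‖²`; this needs no zero of `ψ`, which a complex-valued function
of mean zero need not have. The boundary terms are `∫₀¹ ∂_y[((α₀+α₁)y - α₀)‖ψ(y)‖²] dy`; the
weight is bounded by `M = max |α₀| |α₁|` on `[0,1]`, and Young's inequality bounds them below by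
`(α₀+α₁-M) ∫‖ψ‖² - M ∫‖ψ'‖²`. Combining with Poincaré gives the estimate when `M ≤ μ`; when
`μ < M` the hypothesis on `μ` forces `α₀, α₁ > 0`, and Poincaré alone suffices.
-/

open intervalIntegral Set

theorem sq_integral_unitInterval_le_integral_sq {h : ℝ → ℝ} (hh : Continuous h) :
    (∫ y in (0:ℝ)..1, h y) ^ 2 ≤ ∫ y in (0:ℝ)..1, h y ^ 2 := by
  set c := ∫ y in (0:ℝ)..1, h y
  have hexpand : ∫ y in (0:ℝ)..1, (h y - c) ^ 2 = (∫ y in (0:ℝ)..1, h y ^ 2) - c ^ 2 := by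
    simp only [sub_sq]
    rw [integral_add, integral_sub, integral_mul_const, integral_const_mul]
    · simp only [integral_const, sub_zero, one_smul, c]
      ring
    all_goals exact (by fun_prop : Continuous _).intervalIntegrable _ _
  have hvar : 0 ≤ ∫ y in (0:ℝ)..1, (h y - c) ^ 2 :=
    integral_nonneg zero_le_one fun y _ => sq_nonneg _
  linarith

section NormedSpace

variable {E : Type*} [NormedAddCommGroup E] [NormedSpace ℝ E] [CompleteSpace E]

theorem norm_sub_le_integral_norm_deriv {ψ : ℝ → E} (hψ : ContDiff ℝ 1 ψ) {a b x y : ℝ}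
    (hx : x ∈ Icc a b) (hy : y ∈ Icc a b) :
    ‖ψ y - ψ x‖ ≤ ∫ t in a..b, ‖deriv ψ t‖ := by
  have hψ' : Continuous (deriv ψ) := hψ.continuous_deriv le_rfl
  rw [← integral_deriv_eq_sub (fun t _ => hψ.differentiable one_ne_zero t)
    (hψ'.intervalIntegrable _ _)]
  calc ‖∫ t in x..y, deriv ψ t‖ ≤ |∫ t in x..y, ‖deriv ψ t‖| := norm_integral_le_abs_integral_norm
    _ ≤ |∫ t in a..b, ‖deriv ψ t‖| :=
      abs_integral_mono_interval (uIoc_subset_uIoc_of_uIcc_subset_uIcc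
        (uIcc_subset_uIcc (mem_uIcc_of_le hx.1 hx.2) (mem_uIcc_of_le hy.1 hy.2)))
        (Filter.Eventually.of_forall fun t => norm_nonneg _) (hψ'.norm.intervalIntegrable _ _)
    _ = ∫ t in a..b, ‖deriv ψ t‖ :=
      abs_of_nonneg (integral_nonneg (hx.1.trans hx.2) fun t _ => norm_nonneg _)

theorem norm_le_integral_norm_deriv_of_integral_eq_zero {ψ : ℝ → E} (hψ : ContDiff ℝ 1 ψ)
    (hmean : ∫ x in (0:ℝ)..1, ψ x = 0) {y : ℝ} (hy : y ∈ Icc (0:ℝ) 1) :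
    ‖ψ y‖ ≤ ∫ t in (0:ℝ)..1, ‖deriv ψ t‖ := by
  have hrepr : ψ y = ∫ x in (0:ℝ)..1, (ψ y - ψ x) := by
    rw [integral_sub intervalIntegrable_const (hψ.continuous.intervalIntegrable _ _), hmean]
    simp
  rw [hrepr]
  simpa using norm_integral_le_of_norm_le_const (a := 0) (b := 1) fun x hx =>
    norm_sub_le_integral_norm_deriv hψ
      (Ioc_subset_Icc_self ((uIoc_of_le (zero_le_one (α := ℝ))) ▸ hx)) hy

theorem integral_norm_sq_le_integral_norm_deriv_sq {ψ : ℝ → E} (hψ : ContDiff ℝ 1 ψ)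
    (hmean : ∫ x in (0:ℝ)..1, ψ x = 0) :
    ∫ y in (0:ℝ)..1, ‖ψ y‖ ^ 2 ≤ ∫ y in (0:ℝ)..1, ‖deriv ψ y‖ ^ 2 := by
  have hψ' : Continuous (deriv ψ) := hψ.continuous_deriv le_rfl
  have hbound : ∀ y ∈ Icc (0:ℝ) 1, ‖ψ y‖ ^ 2 ≤ ∫ t in (0:ℝ)..1, ‖deriv ψ t‖ ^ 2 := fun y hy =>
    calc ‖ψ y‖ ^ 2 ≤ (∫ t in (0:ℝ)..1, ‖deriv ψ t‖) ^ 2 := by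
          gcongr; exact norm_le_integral_norm_deriv_of_integral_eq_zero hψ hmean hy
      _ ≤ ∫ t in (0:ℝ)..1, ‖deriv ψ t‖ ^ 2 := sq_integral_unitInterval_le_integral_sq hψ'.norm
  simpa using integral_mono_on zero_le_one ((hψ.continuous.norm.pow 2).intervalIntegrable _ _)
    (intervalIntegrable_const (μ := MeasureTheory.volume)) hbound

end NormedSpace

theorem abs_affine_le_max_abs (α₀ α₁ : ℝ) {y : ℝ} (hy : y ∈ Icc (0:ℝ) 1) :
    |(α₀ + α₁) * y - α₀| ≤ max |α₀| |α₁| := by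
  have h₀ := abs_le.mp (le_max_left |α₀| |α₁|)
  have h₁ := abs_le.mp (le_max_right |α₀| |α₁|)
  rw [abs_le]
  constructor <;> nlinarith [hy.1, hy.2]

section InnerProductSpace

variable {F : Type*} [NormedAddCommGroup F] [InnerProductSpace ℝ F]

open RealInnerProductSpace

theorem boundary_norm_sq_eq_integral {ψ : ℝ → F} (hψ : ContDiff ℝ 1 ψ) (α₀ α₁ : ℝ) :
    α₀ * ‖ψ 0‖ ^ 2 + α₁ * ‖ψ 1‖ ^ 2 = ∫ y in (0:ℝ)..1,
      ((α₀ + α₁) * ‖ψ y‖ ^ 2 + ((α₀ + α₁) * y - α₀) * (2 * ⟪ψ y, deriv ψ y⟫)) := by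
  have hψ' : Continuous (deriv ψ) := hψ.continuous_deriv le_rfl
  have hderiv : ∀ y ∈ uIcc (0:ℝ) 1, HasDerivAt (fun y => ((α₀ + α₁) * y - α₀) * ‖ψ y‖ ^ 2)
      ((α₀ + α₁) * ‖ψ y‖ ^ 2 + ((α₀ + α₁) * y - α₀) * (2 * ⟪ψ y, deriv ψ y⟫)) y := fun y _ => by
    have hweight : HasDerivAt (fun y => (α₀ + α₁) * y - α₀) (α₀ + α₁) y := by
      simpa using ((hasDerivAt_id y).const_mul (α₀ + α₁)).sub_const α₀
    exact hweight.mul (hψ.differentiable one_ne_zero y).hasDerivAt.norm_sq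
  rw [integral_eq_sub_of_hasDerivAt hderiv ((by fun_prop : Continuous _).intervalIntegrable _ _)]
  ring

theorem boundary_norm_sq_ge {ψ : ℝ → F} (hψ : ContDiff ℝ 1 ψ) (α₀ α₁ : ℝ) :
    (α₀ + α₁ - max |α₀| |α₁|) * (∫ y in (0:ℝ)..1, ‖ψ y‖ ^ 2)
        - max |α₀| |α₁| * (∫ y in (0:ℝ)..1, ‖deriv ψ y‖ ^ 2)
      ≤ α₀ * ‖ψ 0‖ ^ 2 + α₁ * ‖ψ 1‖ ^ 2 := by
  set M := max |α₀| |α₁|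
  have hψ' : Continuous (deriv ψ) := hψ.continuous_deriv le_rfl
  have hpointwise : ∀ y ∈ Icc (0:ℝ) 1,
      (α₀ + α₁ - M) * ‖ψ y‖ ^ 2 - M * ‖deriv ψ y‖ ^ 2
        ≤ (α₀ + α₁) * ‖ψ y‖ ^ 2 + ((α₀ + α₁) * y - α₀) * (2 * ⟪ψ y, deriv ψ y⟫) := by
    intro y hy
    have hcross : |((α₀ + α₁) * y - α₀) * (2 * ⟪ψ y, deriv ψ y⟫)|
        ≤ M * (‖ψ y‖ ^ 2 + ‖deriv ψ y‖ ^ 2) := by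
      rw [abs_mul, abs_mul, abs_two]
      gcongr
      · exact abs_affine_le_max_abs α₀ α₁ hy
      · calc 2 * |⟪ψ y, deriv ψ y⟫| ≤ 2 * (‖ψ y‖ * ‖deriv ψ y‖) := by
              gcongr; exact abs_real_inner_le_norm _ _
          _ ≤ ‖ψ y‖ ^ 2 + ‖deriv ψ y‖ ^ 2 := by
              rw [← mul_assoc]; exact two_mul_le_add_sq _ _
    linarith [neg_abs_le (((α₀ + α₁) * y - α₀) * (2 * ⟪ψ y, deriv ψ y⟫))]
  rw [boundary_norm_sq_eq_integral hψ, ← integral_const_mul, ← integral_const_mul,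
    ← integral_sub]
  · exact integral_mono_on zero_le_one ((by fun_prop : Continuous _).intervalIntegrable _ _)
      ((by fun_prop : Continuous _).intervalIntegrable _ _) hpointwise
  all_goals exact (by fun_prop : Continuous _).intervalIntegrable _ _

end InnerProductSpace

theorem energy_ge_of_poincare_of_boundary {μ α₀ α₁ A B b₀ b₁ : ℝ} (hμ : 0 < μ)
    (hμα : μ > 2 * max |α₀| |α₁| - (α₀ + α₁)) (hBA : B ≤ A) (hB : 0 ≤ B)
    (hb₀ : 0 ≤ b₀) (hb₁ : 0 ≤ b₁)
    (hbd : (α₀ + α₁ - max |α₀| |α₁|) * B - max |α₀| |α₁| * A ≤ α₀ * b₀ + α₁ * b₁) :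
    A + (α₀ / μ) * b₀ + (α₁ / μ) * b₁ ≥ (1 - (2 * max |α₀| |α₁| - α₀ - α₁) / μ) * B := by
  set M := max |α₀| |α₁|
  have hα₀ := abs_le.mp (le_max_left |α₀| |α₁|)
  have hα₁ := abs_le.mp (le_max_right |α₀| |α₁|)
  have key : (μ - (2 * M - α₀ - α₁)) * B ≤ μ * A + (α₀ * b₀ + α₁ * b₁) := by
    rcases le_or_gt M μ with hMμ | hμM
    · nlinarith [mul_le_mul_of_nonneg_left hBA (sub_nonneg.mpr hMμ)]
    · have hα₀pos : 0 < α₀ := by linarith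
      have hα₁pos : 0 < α₁ := by linarith
      have hboundary : 0 ≤ α₀ * b₀ + α₁ * b₁ := by positivity
      nlinarith
  rw [ge_iff_le, ← sub_nonneg]
  have hdiff : A + (α₀ / μ) * b₀ + (α₁ / μ) * b₁ - (1 - (2 * M - α₀ - α₁) / μ) * B
      = (μ * A + (α₀ * b₀ + α₁ * b₁) - (μ - (2 * M - α₀ - α₁)) * B) / μ := by
    field_simp
    ring
  rw [hdiff]
  exact div_nonneg (by linarith) hμ.le

/-- Estimate (5.13): weighted second-order energy bound, Navier conditions on both
boundaries. -/
theorem stmt_13 (μ α₀ α₁ : ℝ) (hμ : 0 < μ)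
    (hμα : μ > 2 * max |α₀| |α₁| - (α₀ + α₁))
    (φ : ℝ → ℂ) (hφ : ContDiff ℝ 2 φ) (hbc0 : φ 0 = 0) (hbc1 : φ 1 = 0) :
    (∫ y in (0:ℝ)..1, ‖deriv (deriv φ) y‖ ^ 2)
        + (α₀ / μ) * ‖deriv φ 0‖ ^ 2 + (α₁ / μ) * ‖deriv φ 1‖ ^ 2
      ≥ (1 - (2 * max |α₀| |α₁| - α₀ - α₁) / μ) * ∫ y in (0:ℝ)..1, ‖deriv φ y‖ ^ 2 := by
  have hψ : ContDiff ℝ 1 (deriv φ) := hφ.deriv'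
  have hmean : ∫ y in (0:ℝ)..1, deriv φ y = 0 := by
    rw [integral_deriv_eq_sub (fun y _ => hφ.differentiable two_ne_zero y)
      (hψ.continuous.intervalIntegrable _ _), hbc0, hbc1, sub_zero]
  exact energy_ge_of_poincare_of_boundary hμ hμα
    (integral_norm_sq_le_integral_norm_deriv_sq hψ hmean)
    (integral_nonneg zero_le_one fun y _ => sq_nonneg _) (sq_nonneg _) (sq_nonneg _)
    (boundary_norm_sq_ge hψ α₀ α₁)
end
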